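/- arXiv:2410.15958 — 3 statements merged into one kernel-verified Lean document; each statement's English description precedes it below -/
import Mathlib

section
/- For any string T of length n ≥ 2, el(T)/er(T) ≤ min{2n/σ, σ}, where σ is the number of distinct letters in T and el(T), er(T) are the total numbers of left and right extensions of maximal repeats of T. Equivalently, el(T) ≤ min{2n/σ, σ} · er(T). -/
open Finset

variable {α : Type*}

/-- Number of occurrences of `S` in `T`: positions `i` with `T[i..i+|S|-1] = S`. -/
def occ [DecidableEq α] (T S : List α) : ℕ :=
  ((Finset.range (T.length + 1)).filter fun i => (T.drop i).take S.length = S).card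

/-- `S` is a maximal repeat of `T`. -/
def MaxRepeat [DecidableEq α] (T S : List α) : Prop :=
  2 ≤ occ T S ∧ ∀ a : α, occ T (a :: S) < occ T S ∧ occ T (S ++ [a]) < occ T S

instance [DecidableEq α] [Fintype α] (T S : List α) : Decidable (MaxRepeat T S) := by
  unfold MaxRepeat; infer_instance

/-- The finite set of maximal repeats of `T`. -/
def MRset [DecidableEq α] [Fintype α] (T : List α) : Finset (List α) :=
  (T.tails.flatMap List.inits).toFinset.filter fun S => MaxRepeat T S

/-- Number of right extensions of `S` in `T`. -/
def rext [DecidableEq α] [Fintype α] (T S : List α) : ℕ :=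
  (Finset.univ.filter fun a : α => (S ++ [a]) <:+: T).card

/-- Number of left extensions of `S` in `T`. -/
def lext [DecidableEq α] [Fintype α] (T S : List α) : ℕ :=
  (Finset.univ.filter fun a : α => (a :: S) <:+: T).card

/-- Total number of right extensions of maximal repeats of `T`. -/
def er [DecidableEq α] [Fintype α] (T : List α) : ℕ := ∑ S ∈ MRset T, rext T S

/-- Total number of left extensions of maximal repeats of `T`. -/
def el [DecidableEq α] [Fintype α] (T : List α) : ℕ := ∑ S ∈ MRset T, lext T S


/-!
Each maximal repeat has at most `σ` left extensions and, occurring twice, at least one right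
extension, so `el ≤ σ · er`; the empty word is a maximal repeat whose right extensions are all
`σ` letters, so `σ ≤ er`. It remains to show `el ≤ 2n`, i.e. that there are at most `2n` words
`W = aS` with `S` a maximal repeat. Such a `W` occurs in `T` and less often than its tail `S`,
so a word is never a proper suffix of another such word occurring as often. This lets us code
`W` injectively by a position in `[1, 2n]`: by the end of its occurrence if it occurs once, and
otherwise by `n` plus the end of the first occurrence of its left closure `V` (the longest left
extension of `W` occurring as often as `W`) that is preceded by another letter than the first
occurrence of `V`. Such an occurrence exists because `V` cannot be extended further to the left
without losing occurrences, and distinct left closures yield distinct positions.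
-/

section Occurrences

variable [DecidableEq α]

def occs (T S : List α) : Finset ℕ :=
  (range (T.length + 1)).filter fun i => (T.drop i).take S.length = S

theorem occ_eq_card_occs (T S : List α) : occ T S = (occs T S).card := rfl

theorem mem_occs {T S : List α} {i : ℕ} :
    i ∈ occs T S ↔ ∃ s r, T = s ++ S ++ r ∧ s.length = i := by
  simp only [occs, mem_filter, mem_range, Nat.lt_succ_iff]
  constructor
  · rintro ⟨hi, hS⟩
    refine ⟨T.take i, T.drop (i + S.length), ?_, by simpa using hi⟩
    conv_lhs =>
      rw [← List.take_append_drop i T, ← List.take_append_drop S.length (T.drop i), hS]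
    simp [List.drop_drop, List.append_assoc]
  · rintro ⟨s, r, rfl, rfl⟩
    simp

theorem add_length_le_of_mem_occs {T S : List α} {i : ℕ} (h : i ∈ occs T S) :
    i + S.length ≤ T.length := by
  obtain ⟨s, r, rfl, rfl⟩ := mem_occs.1 h
  simp only [List.length_append]
  omega

theorem infix_iff_occs_nonempty {T S : List α} : S <:+: T ↔ (occs T S).Nonempty := by
  simp only [Finset.Nonempty, mem_occs]
  exact ⟨fun ⟨s, r, h⟩ => ⟨s.length, s, r, h.symm, rfl⟩,
    fun ⟨_, s, r, h, _⟩ => ⟨s, r, h.symm⟩⟩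

theorem add_length_mem_occs {T u Z : List α} {j : ℕ} (h : j ∈ occs T (u ++ Z)) :
    j + u.length ∈ occs T Z := by
  obtain ⟨s, r, rfl, rfl⟩ := mem_occs.1 h
  exact mem_occs.2 ⟨s ++ u, r, by simp, by simp⟩

theorem card_occs_le_of_suffix {T Z Z' : List α} (h : Z <:+ Z') :
    (occs T Z').card ≤ (occs T Z).card := by
  obtain ⟨u, rfl⟩ := h
  exact card_le_card_of_injOn (· + u.length) (fun _ hj => add_length_mem_occs hj)
    (fun _ _ _ _ => Nat.add_right_cancel)

theorem suffix_or_suffix_of_mem_occs {T Z Z' : List α} {j j' : ℕ} (hj : j ∈ occs T Z)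
    (hj' : j' ∈ occs T Z') (hend : j + Z.length = j' + Z'.length) : Z <:+ Z' ∨ Z' <:+ Z := by
  obtain ⟨s, r, rfl, rfl⟩ := mem_occs.1 hj
  obtain ⟨s', r', hT, rfl⟩ := mem_occs.1 hj'
  have hr : r.length = r'.length := by
    have := congrArg List.length hT
    simp only [List.length_append] at this
    omega
  have hpre : s ++ Z = s' ++ Z' := (List.append_inj' hT hr).1
  exact List.suffix_or_suffix_of_suffix (List.suffix_append s Z) (hpre ▸ List.suffix_append s' Z')

theorem card_occs_nil (T : List α) : (occs T []).card = T.length + 1 := by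
  simp [occs]

theorem exists_append_singleton_infix {T S : List α} (h : 2 ≤ (occs T S).card) :
    ∃ a, S ++ [a] <:+: T := by
  obtain ⟨i, hi, j, hj, hij⟩ := one_lt_card.1 h
  wlog hlt : i < j generalizing i j
  · exact this j hj i hi (Ne.symm hij) (by omega)
  obtain ⟨s, r, hT, rfl⟩ := mem_occs.1 hi
  have hjT := add_length_le_of_mem_occs hj
  obtain ⟨a, r', rfl⟩ := List.exists_cons_of_ne_nil (l := r) (by
    rintro rfl
    simp only [hT, List.append_nil, List.length_append] at hjT
    omega)
  exact ⟨a, s, r', by simp [hT]⟩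

def letterBefore (T : List α) (q : ℕ) : Option α := (T.take q).getLast?

theorem letterBefore_of_mem_occs {T Z : List α} {q : ℕ} (h : q ∈ occs T Z) :
    ∃ s r, T = s ++ Z ++ r ∧ s.length = q ∧ letterBefore T q = s.getLast? := by
  obtain ⟨s, r, rfl, rfl⟩ := mem_occs.1 h
  exact ⟨s, r, rfl, rfl, by simp [letterBefore, List.append_assoc]⟩

theorem letterBefore_add_length {T u Z : List α} {j : ℕ} (h : j ∈ occs T (u ++ Z))
    (hu : u ≠ []) : letterBefore T (j + u.length) = u.getLast? := by
  obtain ⟨s, r, rfl, rfl⟩ := mem_occs.1 h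
  have htake : (s ++ (u ++ Z) ++ r).take (s.length + u.length) = s ++ u := by
    simp [List.take_append, List.append_assoc]
  rw [letterBefore, htake, List.getLast?_append_of_ne_nil _ hu]

theorem eq_zero_of_letterBefore_eq_none {T Z : List α} {q : ℕ} (h : q ∈ occs T Z)
    (hq : letterBefore T q = none) : q = 0 := by
  obtain ⟨s, r, -, rfl, hlb⟩ := letterBefore_of_mem_occs h
  simpa [hlb] using hq

theorem sub_one_mem_occs_cons {T Z : List α} {q : ℕ} {c : α} (h : q ∈ occs T Z)
    (hq : letterBefore T q = some c) : q - 1 ∈ occs T (c :: Z) := by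
  obtain ⟨s, r, rfl, rfl, hlb⟩ := letterBefore_of_mem_occs h
  obtain ⟨ys, rfl⟩ := List.getLast?_eq_some_iff.1 (hlb ▸ hq)
  exact mem_occs.2 ⟨ys, r, by simp, by simp⟩

theorem card_occs_cons_eq {T Z : List α} {c : α}
    (h : ∀ q ∈ occs T Z, letterBefore T q = some c) :
    (occs T (c :: Z)).card = (occs T Z).card := by
  refine le_antisymm (card_occs_le_of_suffix (List.suffix_cons c Z)) ?_
  have hpos : ∀ q ∈ occs T Z, q ≠ 0 := fun q hq h0 => by
    simpa [h0, letterBefore] using h q hq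
  refine card_le_card_of_injOn (· - 1) (fun q hq => sub_one_mem_occs_cons hq (h q hq)) ?_
  intro a ha b hb hab
  have := hpos a ha
  have := hpos b hb
  simp only at hab
  omega

noncomputable def firstOcc (T W : List α) : ℕ := sInf (occs T W : Set ℕ)

theorem firstOcc_mem {T W : List α} (h : (occs T W).Nonempty) : firstOcc T W ∈ occs T W :=
  Nat.sInf_mem (coe_nonempty.2 h)

theorem firstOcc_le {T W : List α} {i : ℕ} (h : i ∈ occs T W) : firstOcc T W ≤ i :=
  Nat.sInf_le (mem_coe.2 h)

noncomputable def leftExt (T W : List α) (k : ℕ) : List α := (T.take (firstOcc T W)).drop k ++ W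

noncomputable def leftCut (T W : List α) : ℕ :=
  sInf {k | (occs T (leftExt T W k)).card = (occs T W).card}

/-- The longest extension of `W` to the left, along its first occurrence, that occurs as often
as `W`. -/
noncomputable def leftClosure (T W : List α) : List α := leftExt T W (leftCut T W)

theorem suffix_leftClosure (T W : List α) : W <:+ leftClosure T W :=
  List.suffix_append _ _

theorem leftExt_firstOcc (T W : List α) : leftExt T W (firstOcc T W) = W := by
  simp [leftExt]

theorem card_occs_leftClosure (T W : List α) :
    (occs T (leftClosure T W)).card = (occs T W).card :=
  Nat.sInf_mem (s := {k | (occs T (leftExt T W k)).card = (occs T W).card})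
    ⟨firstOcc T W, by simp only [Set.mem_ofPred_eq, leftExt_firstOcc]⟩

theorem leftCut_le_firstOcc (T W : List α) : leftCut T W ≤ firstOcc T W :=
  Nat.sInf_le (by simp only [Set.mem_ofPred_eq, leftExt_firstOcc])

theorem leftCut_mem_occs {T W : List α} (h : (occs T W).Nonempty) :
    leftCut T W ∈ occs T (leftClosure T W) := by
  obtain ⟨s, r, hT, hs⟩ := mem_occs.1 (firstOcc_mem h)
  have hk : leftCut T W ≤ s.length := hs ▸ leftCut_le_firstOcc T W
  have htake : T.take s.length = s := by rw [hT]; simp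
  refine mem_occs.2 ⟨s.take (leftCut T W), r, ?_, by simpa using hk⟩
  rw [leftClosure, leftExt, ← hs, htake, ← List.append_assoc, List.take_append_drop]
  exact hT

noncomputable def branchOccs (T V : List α) : Finset ℕ :=
  (occs T V).filter fun q => letterBefore T q ≠ letterBefore T (firstOcc T V)

theorem leftExt_pred_leftCut {T W : List α} (h : (occs T W).Nonempty) {c : α}
    (hc : letterBefore T (leftCut T W) = some c) :
    leftExt T W (leftCut T W - 1) = c :: leftClosure T W := by
  set p := firstOcc T W
  set k := leftCut T W
  have hp : p ≤ T.length :=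
    (Nat.le_add_right _ _).trans (add_length_le_of_mem_occs (firstOcc_mem h))
  have hkp : k ≤ p := leftCut_le_firstOcc T W
  have hk0 : k ≠ 0 := fun h0 => by simp [letterBefore, h0] at hc
  have hks : k - 1 < (T.take p).length := by rw [List.length_take]; omega
  have hget : (T.take p)[k - 1] = c := by
    rw [letterBefore, ← min_eq_left hkp, ← List.take_take, List.getLast?_take] at hc
    simpa [hk0, List.getElem?_eq_getElem hks] using hc
  rw [leftClosure, leftExt, leftExt, List.drop_eq_getElem_cons hks, hget,
    Nat.sub_add_cancel (by omega)]
  rfl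

theorem not_forall_letterBefore_eq_some {T W : List α} (h : (occs T W).Nonempty) (c : α) :
    ¬ ∀ q ∈ occs T (leftClosure T W), letterBefore T q = some c := by
  intro hall
  have hk := leftCut_mem_occs h
  have hk0 : leftCut T W ≠ 0 := fun h0 => by simpa [h0, letterBefore] using hall _ hk
  have hcard : (occs T (leftExt T W (leftCut T W - 1))).card = (occs T W).card := by
    rw [leftExt_pred_leftCut h (hall _ hk), card_occs_cons_eq hall, card_occs_leftClosure]
  exact Nat.notMem_of_lt_sInf (by omega : leftCut T W - 1 < leftCut T W) hcard

theorem branchOccs_leftClosure_nonempty {T W : List α} (h : 2 ≤ (occs T W).card) :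
    (branchOccs T (leftClosure T W)).Nonempty := by
  have hW : (occs T W).Nonempty := card_pos.1 (by omega)
  by_contra hempty
  have hall : ∀ q ∈ occs T (leftClosure T W),
      letterBefore T q = letterBefore T (firstOcc T (leftClosure T W)) := fun q hq => by
    by_contra hne
    exact hempty ⟨q, mem_filter.2 ⟨hq, hne⟩⟩
  cases hfirst : letterBefore T (firstOcc T (leftClosure T W)) with
  | none =>
    have hle : (occs T (leftClosure T W)).card ≤ 1 := card_le_one.2 fun a ha b hb => by
      rw [eq_zero_of_letterBefore_eq_none ha (hfirst ▸ hall a ha),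
        eq_zero_of_letterBefore_eq_none hb (hfirst ▸ hall b hb)]
    rw [card_occs_leftClosure] at hle
    omega
  | some c => exact not_forall_letterBefore_eq_some hW c fun q hq => hfirst ▸ hall q hq

noncomputable def branchEnd (T V : List α) : ℕ := sInf (branchOccs T V : Set ℕ) + V.length

theorem sInf_mem_branchOccs {T V : List α} (h : (branchOccs T V).Nonempty) :
    sInf (branchOccs T V : Set ℕ) ∈ branchOccs T V :=
  Nat.sInf_mem (coe_nonempty.2 h)

theorem branchEnd_le_length {T V : List α} (h : (branchOccs T V).Nonempty) :
    branchEnd T V ≤ T.length :=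
  add_length_le_of_mem_occs (mem_filter.1 (sInf_mem_branchOccs h)).1

/-- The letter before `V` inside `u ++ V` precedes the occurrence of `V` ending at the branch end
of `u ++ V` as well as the one inside the first occurrence of `u ++ V`; so the latter is a branch
occurrence of `V` too, and it comes earlier. -/
theorem branchEnd_append_ne {T u V : List α} (hu : u ≠ []) (hV : (branchOccs T V).Nonempty)
    (huV : (branchOccs T (u ++ V)).Nonempty) : branchEnd T V ≠ branchEnd T (u ++ V) := by
  intro h
  set q := sInf (branchOccs T V : Set ℕ)
  set q' := sInf (branchOccs T (u ++ V) : Set ℕ)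
  obtain ⟨-, hqb⟩ := mem_filter.1 (sInf_mem_branchOccs hV)
  obtain ⟨hqo', hqb'⟩ := mem_filter.1 (sInf_mem_branchOccs huV)
  have hf' := firstOcc_mem (T := T) (W := u ++ V) ⟨q', hqo'⟩
  have hq : q = q' + u.length := by
    simp only [branchEnd, List.length_append] at h
    omega
  have hmem : firstOcc T (u ++ V) + u.length ∈ branchOccs T V := by
    refine mem_filter.2 ⟨add_length_mem_occs hf', ?_⟩
    rwa [letterBefore_add_length hf' hu, ← letterBefore_add_length hqo' hu, ← hq]
  have hle : q ≤ firstOcc T (u ++ V) + u.length := Nat.sInf_le (mem_coe.2 hmem)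
  have heq : q' = firstOcc T (u ++ V) := le_antisymm (by omega) (firstOcc_le hqo')
  exact hqb' (congrArg (letterBefore T) heq)

theorem eq_of_branchEnd_eq {T V V' : List α} (hV : (branchOccs T V).Nonempty)
    (hV' : (branchOccs T V').Nonempty) (h : branchEnd T V = branchEnd T V') : V = V' := by
  have hsuf := suffix_or_suffix_of_mem_occs (mem_filter.1 (sInf_mem_branchOccs hV)).1
    (mem_filter.1 (sInf_mem_branchOccs hV')).1 h
  rcases hsuf with ⟨u, rfl⟩ | ⟨u, rfl⟩ <;> rcases eq_or_ne u [] with rfl | hu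
  · rfl
  · exact absurd h (branchEnd_append_ne hu hV hV')
  · rfl
  · exact absurd h.symm (branchEnd_append_ne hu hV' hV)

theorem eq_of_suffix_of_card_occs_eq {T W W' : List α}
    (hW : (occs T W).card < (occs T W.tail).card) (hW' : (occs T W').card < (occs T W'.tail).card)
    (hocc : (occs T W).card = (occs T W').card) (h : W <:+ W' ∨ W' <:+ W) : W = W' := by
  wlog hsuf : W <:+ W' generalizing W W'
  · exact (this hW' hW hocc.symm h.symm (h.resolve_left hsuf)).symm
  by_contra hne
  have hlt : W.length < W'.length :=
    lt_of_le_of_ne hsuf.length_le fun hl => hne (hsuf.eq_of_length hl)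
  have htail : W <:+ W'.tail := by
    rcases List.suffix_or_suffix_of_suffix hsuf (List.tail_suffix W') with h' | h'
    · exact h'
    · have := h'.length_le
      rw [List.length_tail] at this
      rw [h'.eq_of_length (by rw [List.length_tail]; omega)]
  have := card_occs_le_of_suffix (T := T) htail
  omega

theorem ne_nil_of_card_occs_lt_tail {T W : List α} (h : (occs T W).card < (occs T W.tail).card) :
    W ≠ [] := by
  rintro rfl
  exact lt_irrefl _ h

noncomputable def endCode (T W : List α) : ℕ :=
  if (occs T W).card ≤ 1 then firstOcc T W + W.length
  else T.length + branchEnd T (leftClosure T W)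

theorem endCode_mem_Icc_of_card_le_one {T W : List α} (h0 : (occs T W).Nonempty)
    (h1 : (occs T W).card ≤ 1) (hne : W ≠ []) : endCode T W ∈ Icc 1 T.length := by
  have := add_length_le_of_mem_occs (firstOcc_mem h0)
  have := List.length_pos_iff.2 hne
  rw [endCode, if_pos h1, mem_Icc]
  omega

theorem endCode_mem_Icc_of_one_lt {T W : List α} (h1 : 1 < (occs T W).card) (hne : W ≠ []) :
    endCode T W ∈ Icc (T.length + 1) (2 * T.length) := by
  have hend := branchEnd_le_length (branchOccs_leftClosure_nonempty (T := T) (W := W) h1)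
  have := (suffix_leftClosure T W).length_le
  have := List.length_pos_iff.2 hne
  rw [branchEnd] at hend
  rw [endCode, if_neg (by omega), mem_Icc, branchEnd]
  omega

theorem endCode_mem_Icc {T W : List α} (h0 : (occs T W).Nonempty)
    (hW : (occs T W).card < (occs T W.tail).card) : endCode T W ∈ Icc 1 (2 * T.length) := by
  have hne := ne_nil_of_card_occs_lt_tail hW
  rcases le_or_gt (occs T W).card 1 with h1 | h1
  · exact Icc_subset_Icc le_rfl (by omega) (endCode_mem_Icc_of_card_le_one h0 h1 hne)
  · exact Icc_subset_Icc (by omega) le_rfl (endCode_mem_Icc_of_one_lt h1 hne)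

theorem endCode_injOn (T : List α) :
    Set.InjOn (endCode T) {W | (occs T W).Nonempty ∧ (occs T W).card < (occs T W.tail).card} := by
  rintro W ⟨hW0, hW⟩ W' ⟨hW0', hW'⟩ h
  have hne := ne_nil_of_card_occs_lt_tail hW
  have hne' := ne_nil_of_card_occs_lt_tail hW'
  by_cases h1 : (occs T W).card ≤ 1 <;> by_cases h1' : (occs T W').card ≤ 1
  · rw [endCode, if_pos h1, endCode, if_pos h1'] at h
    refine eq_of_suffix_of_card_occs_eq hW hW' ?_
      (suffix_or_suffix_of_mem_occs (firstOcc_mem hW0) (firstOcc_mem hW0') h)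
    have := card_pos.2 hW0
    have := card_pos.2 hW0'
    omega
  · have := mem_Icc.1 (endCode_mem_Icc_of_card_le_one hW0 h1 hne)
    have := mem_Icc.1 (endCode_mem_Icc_of_one_lt (not_le.1 h1') hne')
    omega
  · have := mem_Icc.1 (endCode_mem_Icc_of_one_lt (not_le.1 h1) hne)
    have := mem_Icc.1 (endCode_mem_Icc_of_card_le_one hW0' h1' hne')
    omega
  · rw [endCode, if_neg h1, endCode, if_neg h1', Nat.add_left_cancel_iff] at h
    have hV := eq_of_branchEnd_eq (branchOccs_leftClosure_nonempty (not_le.1 h1))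
      (branchOccs_leftClosure_nonempty (not_le.1 h1')) h
    refine eq_of_suffix_of_card_occs_eq hW hW' ?_
      (List.suffix_or_suffix_of_suffix (suffix_leftClosure T W) (hV ▸ suffix_leftClosure T W'))
    rw [← card_occs_leftClosure T W, hV, card_occs_leftClosure]

theorem card_le_two_mul_length {T : List α} {A : Finset (List α)}
    (hA : ∀ W ∈ A, (occs T W).Nonempty ∧ (occs T W).card < (occs T W.tail).card) :
    A.card ≤ 2 * T.length := by
  calc A.card ≤ (Icc 1 (2 * T.length)).card :=
        card_le_card_of_injOn (endCode T) (fun W hW => endCode_mem_Icc (hA W hW).1 (hA W hW).2)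
          ((endCode_injOn T).mono hA)
    _ = 2 * T.length := by simp

end Occurrences

section MaximalRepeats

variable [DecidableEq α] [Fintype α]

theorem mem_MRset_iff {T S : List α} : S ∈ MRset T ↔ MaxRepeat T S := by
  rw [MRset, mem_filter, and_iff_right_iff_imp]
  intro hS
  have h2 : 2 ≤ (occs T S).card := hS.1
  obtain ⟨s, t, hst⟩ := infix_iff_occs_nonempty.2 (card_pos.1 (by omega : 0 < (occs T S).card))
  rw [List.mem_toFinset, List.mem_flatMap]
  exact ⟨S ++ t, (List.mem_tails _ _).2 ⟨s, by rw [← hst, List.append_assoc]⟩,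
    (List.mem_inits _ _).2 ⟨t, rfl⟩⟩

theorem rext_pos {T S : List α} (hS : S ∈ MRset T) : 0 < rext T S := by
  obtain ⟨a, ha⟩ := exists_append_singleton_infix (mem_MRset_iff.1 hS).1
  exact card_pos.2 ⟨a, mem_filter.2 ⟨mem_univ a, ha⟩⟩

theorem lext_le_card_toFinset (T S : List α) : lext T S ≤ T.toFinset.card :=
  card_le_card fun _ ha => List.mem_toFinset.2 ((mem_filter.1 ha).2.sublist.mem List.mem_cons_self)

theorem el_le_card_toFinset_mul_er (T : List α) : el T ≤ T.toFinset.card * er T := by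
  rw [el, er, mul_sum]
  exact sum_le_sum fun S hS =>
    (lext_le_card_toFinset T S).trans (Nat.le_mul_of_pos_right _ (rext_pos hS))

theorem nil_mem_MRset {T : List α} (h : T ≠ []) : [] ∈ MRset T := by
  have hlen := List.length_pos_iff.2 h
  refine mem_MRset_iff.2 ⟨by rw [occ_eq_card_occs, card_occs_nil]; omega, fun a => ?_⟩
  have hle : (occs T [a]).card ≤ T.length := by
    calc (occs T [a]).card ≤ (range T.length).card :=
          card_le_card fun i hi => mem_range.2 (by simpa using add_length_le_of_mem_occs hi)
      _ = T.length := card_range _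
  simp only [occ_eq_card_occs, List.nil_append, card_occs_nil]
  omega

theorem rext_nil (T : List α) : rext T [] = T.toFinset.card := by
  rw [rext]
  congr 1
  ext a
  simp only [mem_filter, mem_univ, true_and, List.nil_append, List.mem_toFinset]
  exact ⟨fun h => h.sublist.mem (List.mem_singleton_self a), (List.singleton_infix_iff a T).2⟩

theorem card_toFinset_le_er (T : List α) : T.toFinset.card ≤ er T := by
  rcases eq_or_ne T [] with rfl | h
  · simp
  · rw [← rext_nil T]
    exact single_le_sum (fun _ _ => Nat.zero_le _) (nil_mem_MRset h)

theorem el_le_two_mul_length (T : List α) : el T ≤ 2 * T.length := by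
  set P := (MRset T).sigma fun S => univ.filter fun a : α => (a :: S) <:+: T
  have hel : el T = (P.image fun x => x.2 :: x.1).card := by
    rw [card_image_of_injOn, card_sigma]
    · rfl
    rintro ⟨S, a⟩ - ⟨S', a'⟩ - h
    obtain ⟨rfl, rfl⟩ := List.cons.inj h
    rfl
  rw [hel]
  refine card_le_two_mul_length fun W hW => ?_
  obtain ⟨⟨S, a⟩, hx, rfl⟩ := mem_image.1 hW
  obtain ⟨hS, ha⟩ := mem_sigma.1 hx
  exact ⟨infix_iff_occs_nonempty.1 (mem_filter.1 ha).2, ((mem_MRset_iff.1 hS).2 a).1⟩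

end MaximalRepeats

theorem el_le_min_mul_er_general [DecidableEq α] [Fintype α] (T : List α) :
    (el T : ℝ) ≤
      min (2 * T.length / (T.toFinset.card : ℝ)) (T.toFinset.card : ℝ) * er T := by
  have hlen : (el T : ℝ) ≤ 2 * T.length := by exact_mod_cast el_le_two_mul_length T
  have hσ : (el T : ℝ) ≤ T.toFinset.card * er T := by
    exact_mod_cast el_le_card_toFinset_mul_er T
  have her : (T.toFinset.card : ℝ) ≤ er T := by exact_mod_cast card_toFinset_le_er T
  rw [min_mul_of_nonneg _ _ (Nat.cast_nonneg _)]
  refine le_min ?_ hσ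
  rcases (Nat.cast_nonneg T.toFinset.card : (0 : ℝ) ≤ _).eq_or_lt with h0 | hpos
  · simpa [← h0] using hσ
  · calc (el T : ℝ) ≤ 2 * T.length := hlen
      _ = 2 * T.length / T.toFinset.card * T.toFinset.card := by field_simp
      _ ≤ 2 * T.length / T.toFinset.card * er T := by gcongr

/-- `el(T) ≤ min{2n/σ, σ} · er(T)`. -/
theorem el_le_min_mul_er [DecidableEq α] [Fintype α] (T : List α) (h : 2 ≤ T.length) :
    (el T : ℝ) ≤
      min (2 * T.length / (T.toFinset.card : ℝ)) (T.toFinset.card : ℝ) * er T :=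
  el_le_min_mul_er_general T
end

section
/- Let k ≥ 2 and let T_k be the string over the alphabet {a_1,...,a_k, $_1,...,$_k} (all 2k letters distinct) defined as T_k = $_1 a_1 $_2 a_1 a_2 $_3 a_1 a_2 a_3 ⋯ $_k a_1 a_2 ⋯ a_k, i.e., the concatenation over i = 1..k of the blocks $_i a_1 a_2 ⋯ a_i. Then the set of maximal repeats of T_k is exactly {ε, a_1, a_1 a_2, ..., a_1 a_2 ⋯ a_{k-1}}. -/
open Finset

variable {α : Type*}

/-- The string `T_k = $_1 a_1 $_2 a_1 a_2 ⋯ $_k a_1 ⋯ a_k` over the alphabet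
`Fin k ⊕ Fin k`, where `a_{i+1} = Sum.inl i` and `$_{i+1} = Sum.inr i`. -/
def Tk (k : ℕ) : List (Fin k ⊕ Fin k) :=
  (List.finRange k).flatMap fun i =>
    Sum.inr i :: ((List.finRange k).take ((i : ℕ) + 1)).map Sum.inl

/-- The string `a_1 a_2 ⋯ a_i` over the alphabet `Fin k ⊕ Fin k`. -/
def Pk (k i : ℕ) : List (Fin k ⊕ Fin k) :=
  ((List.finRange k).take i).map Sum.inl

/-!
Each `$_i` occurs once in `T_k`, so a repeat is a word over the letters `a_j`. The `$`'s cut `T_k`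
into the blocks `a_1 ⋯ a_i`, whose letters are distinct, so such a word occurs at most once in
each block, and it occurs in some block iff it is a run `a_{j+1} ⋯ a_{j+m}`; it then occurs in
exactly the `k + 1 - (j + m)` blocks with `i ≥ j + m`. If `j > 0`, the run is always preceded by
`a_j`, so it is not left-maximal. The prefixes `a_1 ⋯ a_m` are left-maximal because `a_1` only
starts blocks, and right-maximal because a right extension, if it is a run at all, is
`a_1 ⋯ a_{m+1}`, which occurs once less.
-/

theorem List.prefix_append_iff_of_forall_head?_not_mem {S u v : List α}
    (hv : ∀ c ∈ v.head?, c ∉ S) : S <+: u ++ v ↔ S <+: u := by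
  refine ⟨fun h => ?_, fun h => h.trans (List.prefix_append u v)⟩
  by_cases hl : S.length ≤ u.length
  · exact List.prefix_of_prefix_length_le h (List.prefix_append u v) hl
  obtain ⟨c, v, rfl⟩ : ∃ c w, v = c :: w := List.exists_cons_of_ne_nil fun hv => by
    rw [hv, List.append_nil] at h
    exact absurd h.length_le hl
  have hc : S[u.length]'(by omega) = c := by
    rw [List.IsPrefix.getElem h]
    simp
  exact (hv c rfl (hc ▸ List.getElem_mem _)).elim

theorem List.not_prefix_cons_of_not_mem {S T : List α} {c : α} (hS : S ≠ []) (hc : c ∉ S) :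
    ¬ S <+: c :: T := by
  obtain ⟨x, S, rfl⟩ := List.exists_cons_of_ne_nil hS
  rw [List.cons_prefix_cons]
  rintro ⟨rfl, -⟩
  exact hc List.mem_cons_self

theorem List.map_infix_map_iff_of_injective {β : Type*} {f : α → β}
    (hf : Function.Injective f) {l₁ l₂ : List α} : l₁.map f <:+: l₂.map f ↔ l₁ <:+: l₂ := by
  refine ⟨fun h => ?_, fun h => h.map f⟩
  obtain ⟨l, hl, he⟩ := List.infix_map_iff.1 h
  rwa [List.map_injective_iff.2 hf he]

theorem List.exists_eq_map_inl {β γ : Type*} {S : List (β ⊕ γ)} (h : ∀ c, Sum.inr c ∉ S) :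
    ∃ s : List β, S = s.map Sum.inl := by
  induction S with
  | nil => exact ⟨[], rfl⟩
  | cons x S ih =>
    obtain ⟨s, rfl⟩ := ih fun c hc => h c (List.mem_cons_of_mem _ hc)
    cases x with
    | inl a => exact ⟨a :: s, rfl⟩
    | inr c => exact (h c List.mem_cons_self).elim

theorem List.infix_range_iff {l : List ℕ} {n : ℕ} :
    l <:+: List.range n ↔ ∃ j, j + l.length ≤ n ∧ l = List.range' j l.length := by
  have hdrop : ∀ j, (List.range n).drop j = List.range' j (n - j) := fun j => by
    simp [List.range_eq_range', List.drop_range']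
  constructor
  · intro h
    obtain ⟨t, hlt, hts⟩ := List.infix_iff_prefix_suffix.1 h
    obtain ⟨j, hjn, rfl⟩ : ∃ j ≤ n, t = (List.range n).drop j :=
      ⟨_, by simp, List.suffix_iff_eq_drop.1 hts⟩
    have hle := hlt.length_le
    rw [hdrop] at hlt hle
    rw [List.prefix_iff_eq_take, List.take_range'_of_length_ge (by simpa using hle)] at hlt
    rw [List.length_range'] at hle
    exact ⟨j, by omega, hlt⟩
  · rintro ⟨j, hj, hl⟩
    refine List.infix_iff_prefix_suffix.2 ⟨_, ?_, List.drop_suffix j _⟩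
    rw [hdrop, List.prefix_iff_eq_take, List.take_range'_of_length_ge (by omega)]
    exact hl

section Occurrences

variable [DecidableEq α]

theorem occ_nil_left (S : List α) : occ [] S = if S = [] then 1 else 0 := by
  cases S <;> simp [occ]

theorem occ_nil_right (T : List α) : occ T [] = T.length + 1 := by
  simp [occ]

theorem occ_cons (x : α) (T S : List α) :
    occ (x :: T) S = occ T S + if S <+: x :: T then 1 else 0 := by
  simp only [occ, card_filter, List.length_cons, sum_range_succ', List.drop_succ_cons,
    List.drop_zero]
  simp [List.prefix_iff_eq_take (l₂ := x :: T), eq_comm]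

theorem occ_pos_iff {T S : List α} : 0 < occ T S ↔ S <:+: T := by
  induction T with
  | nil => by_cases h : S = [] <;> simp [occ_nil_left, h]
  | cons x T ih => by_cases h : S <+: x :: T <;> simp [occ_cons, List.infix_cons_iff, h, ih]

theorem occ_singleton (T : List α) (a : α) : occ T [a] = T.count a := by
  induction T with
  | nil => simp [occ_nil_left]
  | cons x T ih => by_cases h : x = a <;> simp [occ_cons, h, ih, Ne.symm]

theorem occ_le_length (T : List α) {S : List α} (hS : S ≠ []) : occ T S ≤ T.length := by
  induction T with
  | nil => simp [occ_nil_left, hS]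
  | cons x T ih => rw [occ_cons, List.length_cons]; split_ifs <;> omega

theorem occ_le_occ_of_prefix (T : List α) {S' S : List α} (h : S' <+: S) :
    occ T S ≤ occ T S' := by
  obtain ⟨U, rfl⟩ := h
  induction T with
  | nil => cases S' <;> cases U <;> simp [occ_nil_left]
  | cons x T ih =>
    have : S' ++ U <+: x :: T → S' <+: x :: T := (List.prefix_append S' U).trans
    rw [occ_cons, occ_cons]
    split_ifs <;> grind

theorem occ_cons_cons_le (x y : α) (T S : List α) : occ (y :: T) (x :: S) ≤ occ T S := by
  induction T generalizing y with
  | nil =>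
    rw [occ_cons, occ_nil_left, occ_nil_left]
    split_ifs with h₁ h₂ <;> simp_all [List.prefix_nil]
  | cons z T ih =>
    have := ih z
    have : x :: S <+: y :: z :: T → S <+: z :: T := fun h => (List.cons_prefix_cons.1 h).2
    rw [occ_cons, occ_cons z T S]
    split_ifs <;> grind

theorem occ_le_occ_of_suffix (T : List α) {S' S : List α} (h : S' <:+ S) :
    occ T S ≤ occ T S' := by
  obtain ⟨U, rfl⟩ := h
  induction U with
  | nil => rfl
  | cons x U ih =>
    refine le_trans ?_ ih
    cases T with
    | nil => simp [occ_nil_left]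
    | cons y T => exact (occ_cons_cons_le x y T (U ++ S')).trans (by rw [occ_cons]; omega)

theorem occ_le_occ_of_infix (T : List α) {S' S : List α} (h : S' <:+: S) :
    occ T S ≤ occ T S' := by
  obtain ⟨U, V, rfl⟩ := h
  exact (occ_le_occ_of_prefix T (List.prefix_append _ V)).trans
    (occ_le_occ_of_suffix T (List.suffix_append U S'))

theorem occ_le_count (T : List α) {S : List α} {a : α} (ha : a ∈ S) : occ T S ≤ T.count a :=
  occ_singleton T a ▸ occ_le_occ_of_infix T ((List.singleton_infix_iff _ _).2 ha)

theorem occ_eq_ite_of_nodup {T S : List α} (hT : T.Nodup) (hS : S ≠ []) :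
    occ T S = if S <:+: T then 1 else 0 := by
  obtain ⟨x, S, rfl⟩ := List.exists_cons_of_ne_nil hS
  have hle : occ T (x :: S) ≤ 1 :=
    (occ_le_count T List.mem_cons_self).trans (List.nodup_iff_count_le_one.1 hT x)
  split_ifs with h
  · exact le_antisymm hle (occ_pos_iff.2 h)
  · exact Nat.eq_zero_of_not_pos (mt occ_pos_iff.1 h)

theorem occ_append {S u v : List α} (hS : S ≠ []) (hv : ∀ c ∈ v.head?, c ∉ S) :
    occ (u ++ v) S = occ u S + occ v S := by
  induction u with
  | nil => simp [occ_nil_left, hS]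
  | cons x u ih =>
    rw [List.cons_append, occ_cons, occ_cons, ih, ← List.cons_append]
    simp only [List.prefix_append_iff_of_forall_head?_not_mem hv]
    omega

theorem occ_flatMap_cons {β : Type*} {S : List α} (sep : β → α) (f : β → List α) (l : List β)
    (hS : S ≠ []) (hsep : ∀ b ∈ l, sep b ∉ S) :
    occ (l.flatMap fun b => sep b :: f b) S = (l.map fun b => occ (f b) S).sum := by
  induction l with
  | nil => simp [occ_nil_left, hS]
  | cons b l ih =>
    have hhead : ∀ c ∈ (l.flatMap fun b => sep b :: f b).head?, c ∉ S := by
      cases l <;> simp_all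
    rw [List.flatMap_cons, List.cons_append, occ_cons, if_neg (List.not_prefix_cons_of_not_mem hS
      (hsep b List.mem_cons_self)), occ_append hS hhead, ih fun b hb => hsep b (by simp [hb])]
    simp

end Occurrences
section Tk

variable {k : ℕ}

theorem Tk_eq_flatMap (k : ℕ) :
    Tk k = (List.finRange k).flatMap fun b => Sum.inr b :: Pk k (b + 1) :=
  rfl

theorem map_val_take_finRange {n : ℕ} (hn : n ≤ k) :
    ((List.finRange k).take n).map Fin.val = List.range n := by
  rw [List.map_take, List.map_coe_finRange_eq_range, List.take_range, min_eq_left hn]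

theorem nodup_Pk (k n : ℕ) : (Pk k n).Nodup :=
  ((List.take_sublist _ _).nodup (List.nodup_finRange k)).map Sum.inl_injective

theorem map_inl_infix_Pk_iff {s : List (Fin k)} {n : ℕ} (hn : n ≤ k) :
    s.map Sum.inl <:+: Pk k n ↔ s.map Fin.val <:+: List.range n := by
  rw [Pk, List.map_infix_map_iff_of_injective Sum.inl_injective, ← map_val_take_finRange hn,
    List.map_infix_map_iff_of_injective Fin.val_injective]

theorem occ_Tk_map_inl {s : List (Fin k)} (hs : s ≠ []) :
    occ (Tk k) (s.map Sum.inl) = #{b ∈ range k | s.map Fin.val <:+: List.range (b + 1)} := by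
  rw [Tk_eq_flatMap, occ_flatMap_cons _ _ _ (by simpa) (by simp), card_filter,
    ← Fin.sum_univ_eq_sum_range, Fin.sum_univ_def]
  congr 1
  refine List.map_congr_left fun b _ => ?_
  rw [occ_eq_ite_of_nodup (nodup_Pk _ _) (by simpa)]
  exact if_congr (map_inl_infix_Pk_iff b.isLt) rfl rfl

theorem occ_Tk_singleton_inr (c : Fin k) : occ (Tk k) [Sum.inr c] = 1 := by
  rw [occ_singleton]
  -- `occ_singleton` counts with the `DecidableEq`-derived `BEq`, not with `Sum.instBEq`,
  -- so the `List.count` lemmas do not rewrite it; `countP` avoids `BEq` altogether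
  show (Tk k).countP (fun x => decide (x = Sum.inr c)) = 1
  have hPk : ∀ n, (Pk k n).countP (fun x => decide (x = Sum.inr c)) = 0 := fun n =>
    List.countP_eq_zero.2 fun x hx => by obtain ⟨y, -, rfl⟩ := List.mem_map.1 hx; simp
  rw [Tk_eq_flatMap, List.countP_flatMap]
  simp only [Function.comp_def, List.countP_cons, hPk, zero_add, decide_eq_true_eq, Sum.inr.injEq]
  rw [← Fin.sum_univ_def]
  simp

theorem occ_Tk_le_one_of_inr_mem {S : List (Fin k ⊕ Fin k)} {c : Fin k} (hc : Sum.inr c ∈ S) :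
    occ (Tk k) S ≤ 1 :=
  occ_Tk_singleton_inr c ▸ occ_le_occ_of_infix _ ((List.singleton_infix_iff _ _).2 hc)

theorem occ_Tk_of_map_val_eq_range' {s : List (Fin k)} {j m : ℕ} (hm : 0 < m)
    (h : s.map Fin.val = List.range' j m) : occ (Tk k) (s.map Sum.inl) = k + 1 - (j + m) := by
  have hlen : s.length = m := by simpa using congrArg List.length h
  have hs : s ≠ [] := List.ne_nil_of_length_pos (hlen ▸ hm)
  have hinfix : ∀ n, s.map Fin.val <:+: List.range n ↔ j + m ≤ n := fun n => by
    rw [List.infix_range_iff, List.length_map, hlen, h]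
    simp only [List.range'_inj]
    constructor
    · rintro ⟨j', hj', -, hj | rfl⟩ <;> omega
    · exact fun hn => ⟨j, hn, by simp⟩
  rw [occ_Tk_map_inl hs]
  simp only [hinfix]
  rw [show {b ∈ range k | j + m ≤ b + 1} = Ico (j + m - 1) k by
    ext; simp only [mem_filter, mem_range, mem_Ico]; omega, Nat.card_Ico]
  omega

theorem exists_map_val_eq_range'_of_occ_Tk_pos {s : List (Fin k)}
    (h : 0 < occ (Tk k) (s.map Sum.inl)) : ∃ j, s.map Fin.val = List.range' j s.length := by
  rcases eq_or_ne s [] with rfl | hs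
  · exact ⟨0, rfl⟩
  rw [occ_Tk_map_inl hs, card_pos] at h
  obtain ⟨b, hb⟩ := h
  obtain ⟨j, -, hj⟩ := List.infix_range_iff.1 (mem_filter.1 hb).2
  exact ⟨j, by simpa using hj⟩

theorem occ_Tk_Pk {m : ℕ} (hm : 0 < m) (hmk : m ≤ k) : occ (Tk k) (Pk k m) = k + 1 - m := by
  rw [Pk, occ_Tk_of_map_val_eq_range' hm (by rw [map_val_take_finRange hmk, List.range_eq_range'])]
  omega

theorem eq_Pk_of_maxRepeat_Tk {S : List (Fin k ⊕ Fin k)} (hS : S ≠ [])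
    (h : MaxRepeat (Tk k) S) : ∃ m, 1 ≤ m ∧ m ≤ k - 1 ∧ S = Pk k m := by
  obtain ⟨h2, hext⟩ := h
  obtain ⟨s, rfl⟩ := List.exists_eq_map_inl (S := S) fun c hc => by
    have := occ_Tk_le_one_of_inr_mem hc
    omega
  have hm : 0 < s.length := by simpa [List.length_pos_iff] using hS
  obtain ⟨j, hj⟩ := exists_map_val_eq_range'_of_occ_Tk_pos (s := s) (by omega)
  have hocc := occ_Tk_of_map_val_eq_range' hm hj
  rcases j with _ | j
  · have hmk : s.length ≤ k - 1 := by omega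
    have hs : s = (List.finRange k).take s.length := List.map_injective_iff.2 Fin.val_injective
      (by rw [hj, map_val_take_finRange (by omega), List.range_eq_range'])
    exact ⟨s.length, hm, hmk, congrArg (List.map Sum.inl) hs⟩
  · have hjk : j < k := by omega
    have hleft := (hext (Sum.inl ⟨j, hjk⟩)).1
    rw [← List.map_cons, occ_Tk_of_map_val_eq_range' (m := s.length + 1) (j := j) (by omega)
      (by rw [List.map_cons, hj, List.range'_succ])] at hleft
    omega

theorem maxRepeat_Tk_nil (hk : 0 < k) : MaxRepeat (Tk k) [] := by
  have hlen : 1 ≤ (Tk k).length :=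
    occ_Tk_singleton_inr ⟨0, hk⟩ ▸ occ_le_length _ (List.cons_ne_nil _ _)
  have hsingle : ∀ a, occ (Tk k) [a] < occ (Tk k) [] := fun a => by
    rw [occ_nil_right]
    exact Nat.lt_succ_of_le (occ_le_length _ (List.cons_ne_nil _ _))
  exact ⟨by rw [occ_nil_right]; omega, fun a => ⟨hsingle a, hsingle a⟩⟩

theorem occ_Tk_inl_cons_Pk (b : Fin k) {m : ℕ} (hm : 0 < m) (hmk : m ≤ k) :
    occ (Tk k) (Sum.inl b :: Pk k m) = 0 := by
  by_contra hne
  rw [Pk, ← List.map_cons] at hne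
  obtain ⟨j, hj⟩ := exists_map_val_eq_range'_of_occ_Tk_pos (Nat.pos_of_ne_zero hne)
  simp only [List.map_cons, map_val_take_finRange hmk, List.range_eq_range', List.length_cons,
    List.length_take, List.length_finRange, min_eq_left hmk, List.range'_succ, List.cons.injEq,
    List.range'_inj] at hj
  omega

theorem occ_Tk_Pk_append_inl_lt (b : Fin k) {m : ℕ} (hm : 0 < m) (hmk : m < k) :
    occ (Tk k) (Pk k m ++ [Sum.inl b]) < occ (Tk k) (Pk k m) := by
  rw [occ_Tk_Pk hm hmk.le,
    show Pk k m ++ [Sum.inl b] = ((List.finRange k).take m ++ [b]).map Sum.inl by simp [Pk]]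
  rcases Nat.eq_zero_or_pos (occ (Tk k) (((List.finRange k).take m ++ [b]).map Sum.inl))
    with h0 | hpos
  · omega
  obtain ⟨j, hj⟩ := exists_map_val_eq_range'_of_occ_Tk_pos hpos
  have hlen : ((List.finRange k).take m ++ [b]).length = m + 1 := by simp [hmk.le]
  rw [hlen] at hj
  have hj0 : j = 0 := by
    obtain ⟨m', rfl⟩ : ∃ m', m = m' + 1 := ⟨m - 1, by omega⟩
    simp only [List.map_append, map_val_take_finRange hmk.le, List.range_eq_range',
      List.range'_succ, List.cons_append, List.cons.injEq] at hj
    exact hj.1.symm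
  rw [occ_Tk_of_map_val_eq_range' (by omega) (hj0 ▸ hj)]
  omega

theorem maxRepeat_Tk_Pk {m : ℕ} (hm : 0 < m) (hmk : m < k) : MaxRepeat (Tk k) (Pk k m) := by
  have hocc := occ_Tk_Pk hm hmk.le
  refine ⟨by omega, fun a => ?_⟩
  rcases a with b | c
  · exact ⟨by rw [occ_Tk_inl_cons_Pk b hm hmk.le]; omega, occ_Tk_Pk_append_inl_lt b hm hmk⟩
  · have hleft := occ_Tk_le_one_of_inr_mem (S := Sum.inr c :: Pk k m) List.mem_cons_self
    have hright := occ_Tk_le_one_of_inr_mem (S := Pk k m ++ [Sum.inr c])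
      (List.mem_append_right _ (List.mem_singleton_self _))
    omega

end Tk

/-- the maximal repeats of `T_k` are exactly
`ε, a_1, a_1 a_2, …, a_1 ⋯ a_{k-1}`. -/
theorem maximal_repeats_Tk (k : ℕ) (hk : 2 ≤ k) (S : List (Fin k ⊕ Fin k)) :
    MaxRepeat (Tk k) S ↔ S = [] ∨ ∃ i, 1 ≤ i ∧ i ≤ k - 1 ∧ S = Pk k i := by
  constructor
  · intro h
    by_cases hS : S = []
    · exact Or.inl hS
    · exact Or.inr (eq_Pk_of_maxRepeat_Tk hS h)
  · rintro (rfl | ⟨i, hi, hik, rfl⟩)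
    · exact maxRepeat_Tk_nil (by omega)
    · exact maxRepeat_Tk_Pk hi (by omega)
end

section
/- Let σ ≥ 2, k ≥ 2, and T = b_1 a^k $ b_2 a^k $ ⋯ b_σ a^k $ over σ+2 distinct letters. Then el(T) = (k−1)(σ+1) + σ + (σ+2) and er(T) = 2(k−1) + (σ−1) + (σ+2); in particular el(T) ∈ Θ(kσ) and er(T) ∈ Θ(k + σ). -/
open Finset

variable {α : Type*}

/-- Alphabet `{$, a, b_1, …, b_σ}` of size `σ + 2`. -/
abbrev Alph (σ : ℕ) := Unit ⊕ Unit ⊕ Fin σ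

/-- The letter `$`. -/
def dol (σ : ℕ) : Alph σ := Sum.inl ()

/-- The letter `a`. -/
def la (σ : ℕ) : Alph σ := Sum.inr (Sum.inl ())

/-- The letter `b_{j+1}`. -/
def lb (σ : ℕ) (j : Fin σ) : Alph σ := Sum.inr (Sum.inr j)

/-- The string `T = b_1 a^k $ b_2 a^k $ ⋯ b_σ a^k $`. -/
def W (σ k : ℕ) : List (Alph σ) :=
  (List.finRange σ).flatMap fun j =>
    lb σ j :: (List.replicate k (la σ) ++ [dol σ])

/-!
Every letter `b_j` occurs exactly once in `T`, and `$` is followed either by some `b_j` or by the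
end of `T`; hence a string occurring twice is `a^i` or `a^i $`. The runs of `a` are exactly the `σ`
blocks `a^k`, each preceded by some `b_j` and followed by `$`. So `a^k` is always followed by `$`,
and `a^i $` with `i < k` is always preceded by `a`: neither is maximal. The remaining candidates
`ε`, `a^i` (`1 ≤ i < k`) and `a^k $` are maximal, and their extensions are read off the blocks.
A position of `T` is handled as `j * (k + 2) + r` with `r < k + 2`: the `r`-th letter of block `j`.
-/

open List

theorem card_filter_lt_card_iff {β : Type*} {s : Finset β} {P : β → Prop} [DecidablePred P] :
    (s.filter P).card < s.card ↔ ∃ x ∈ s, ¬P x := by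
  rw [(Finset.card_filter_le _ _).lt_iff_ne, Ne, Finset.card_filter_eq_iff]
  push Not
  rfl

theorem card_filter_fin_val_ne_zero {n : ℕ} :
    (Finset.univ.filter fun j : Fin n => (j : ℕ) ≠ 0).card = n - 1 := by
  rcases n with _ | n
  · simp
  · simp only [ne_eq, ← Fin.val_zero (n + 1), Fin.val_inj]
    rw [Finset.filter_ne', Finset.card_erase_of_mem (Finset.mem_univ _), Finset.card_univ,
      Fintype.card_fin]

section Occurrences

variable [DecidableEq α] {T S : List α} {p : ℕ} {c : α}

def occurrences (T S : List α) : Finset ℕ :=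
  (Finset.range (T.length + 1)).filter fun i => (T.drop i).take S.length = S

theorem occ_eq_card_occurrences : occ T S = (occurrences T S).card := rfl

theorem mem_occurrences :
    p ∈ occurrences T S ↔
      p ≤ T.length ∧ ∀ t (ht : t < S.length), T[p + t]? = some S[t] := by
  simp only [occurrences, Finset.mem_filter, Finset.mem_range, Nat.lt_succ_iff, eq_comm (b := S),
    ← prefix_iff_eq_take, prefix_iff_getElem?, getElem?_drop]

theorem infix_iff_nonempty_occurrences : S <:+: T ↔ (occurrences T S).Nonempty := by
  constructor
  · rintro ⟨u, v, rfl⟩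
    refine ⟨u.length, mem_occurrences.2 ⟨by simp, fun t ht => ?_⟩⟩
    rw [append_assoc, getElem?_append_right (by omega), Nat.add_sub_cancel_left,
      getElem?_append_left ht, getElem?_eq_getElem]
  · rintro ⟨p, hp⟩
    simp only [occurrences, Finset.mem_filter] at hp
    rw [← hp.2]
    exact (take_prefix _ _).isInfix.trans (drop_suffix _ _).isInfix

theorem mem_occurrences_append_singleton :
    p ∈ occurrences T (S ++ [c]) ↔ p ∈ occurrences T S ∧ T[p + S.length]? = some c := by
  simp only [mem_occurrences, length_append, length_singleton]
  constructor
  · rintro ⟨hp, h⟩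
    refine ⟨⟨hp, fun t ht => by simpa [getElem_append_left ht] using h t (by omega)⟩, ?_⟩
    simpa using h S.length (by omega)
  · rintro ⟨⟨hp, h⟩, hc⟩
    refine ⟨hp, fun t ht => ?_⟩
    rcases Nat.lt_succ_iff_lt_or_eq.1 ht with ht | rfl
    · simpa [getElem_append_left ht] using h t ht
    · simpa using hc

theorem mem_occurrences_cons :
    p ∈ occurrences T (c :: S) ↔ p + 1 ∈ occurrences T S ∧ T[p]? = some c := by
  simp only [mem_occurrences, length_cons]
  constructor
  · rintro ⟨hp, h⟩
    have hc : T[p]? = some c := h 0 (by omega)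
    refine ⟨⟨?_, fun t ht => by rw [Nat.add_right_comm]; exact h (t + 1) (by omega)⟩, hc⟩
    have := (List.getElem?_eq_some_iff.1 hc).1
    omega
  · rintro ⟨⟨hp, h⟩, hc⟩
    refine ⟨by omega, fun t ht => ?_⟩
    cases t with
    | zero => simpa using hc
    | succ t => rw [← Nat.add_assoc, Nat.add_right_comm]; exact h t (by omega)

theorem occurrences_append_singleton :
    occurrences T (S ++ [c]) = (occurrences T S).filter fun p => T[p + S.length]? = some c := by
  ext p
  rw [mem_occurrences_append_singleton, Finset.mem_filter]

theorem occurrences_cons :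
    (occurrences T (c :: S)).map ⟨(· + 1), add_left_injective 1⟩ =
      (occurrences T S).filter fun p => 0 < p ∧ T[p - 1]? = some c := by
  ext p
  simp only [Finset.mem_map, Finset.mem_filter, mem_occurrences_cons, Function.Embedding.coeFn_mk]
  constructor
  · rintro ⟨i, ⟨hi, hc⟩, rfl⟩
    exact ⟨hi, by omega, hc⟩
  · rintro ⟨hp, hp0, hc⟩
    exact ⟨p - 1, ⟨by rwa [Nat.sub_add_cancel hp0], hc⟩, by omega⟩

theorem infix_of_mem_occurrences (hp : p ∈ occurrences T S) : S <:+: T :=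
  infix_iff_nonempty_occurrences.2 ⟨p, hp⟩

theorem pair_infix_iff {x y : α} :
    [x, y] <:+: T ↔ ∃ p, T[p]? = some x ∧ T[p + 1]? = some y := by
  rw [infix_iff_nonempty_occurrences]
  constructor
  · rintro ⟨p, hp⟩
    simp only [mem_occurrences_cons] at hp
    exact ⟨p, hp.2, hp.1.2⟩
  · rintro ⟨p, hx, hy⟩
    refine ⟨p, mem_occurrences_cons.2 ⟨mem_occurrences_cons.2
      ⟨mem_occurrences.2 ⟨?_, by simp⟩, hy⟩, hx⟩⟩
    have := (List.getElem?_eq_some_iff.1 hy).1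
    omega

theorem occ_cons_s16 :
    occ T (c :: S) = ((occurrences T S).filter fun p => 0 < p ∧ T[p - 1]? = some c).card := by
  rw [occ_eq_card_occurrences, ← occurrences_cons, Finset.card_map]

theorem maxRepeat_iff : MaxRepeat T S ↔ 2 ≤ (occurrences T S).card ∧ ∀ c,
    (∃ p ∈ occurrences T S, ¬(0 < p ∧ T[p - 1]? = some c)) ∧
      ∃ p ∈ occurrences T S, T[p + S.length]? ≠ some c := by
  simp only [MaxRepeat, occ_cons_s16]
  simp only [occ_eq_card_occurrences, occurrences_append_singleton, card_filter_lt_card_iff]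

theorem mem_MRset [Fintype α] : S ∈ MRset T ↔ MaxRepeat T S := by
  refine ⟨fun h => (Finset.mem_filter.1 h).2, fun h => Finset.mem_filter.2 ⟨?_, h⟩⟩
  have hocc : 0 < (occurrences T S).card := two_pos.trans_le h.1
  obtain ⟨t, hpre, hsuf⟩ :=
    infix_iff_prefix_suffix.1 (infix_iff_nonempty_occurrences.2 (Finset.card_pos.1 hocc))
  exact mem_toFinset.2 (mem_flatMap.2 ⟨t, (mem_tails _ _).2 hsuf, (mem_inits _ _).2 hpre⟩)

theorem maxRepeat_nil (hT : T ≠ []) : MaxRepeat T [] := by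
  have hnil : occurrences T [] = Finset.range (T.length + 1) := by
    ext p; simp [mem_occurrences]
  refine maxRepeat_iff.2 ⟨?_, fun c => ⟨⟨0, ?_, by simp⟩, ⟨T.length, ?_, by simp⟩⟩⟩
  · rw [hnil, Finset.card_range]
    have := length_pos_iff.2 hT
    omega
  all_goals simp [hnil]

end Occurrences

theorem eq_replicate_or_eq_replicate_append_singleton {β : Type*} {x y : β} {S : List β}
    (h : ∀ t (ht : t < S.length), S[t] = x ∨ (S[t] = y ∧ t + 1 = S.length)) :
    (∃ i, S = replicate i x) ∨ ∃ i, S = replicate i x ++ [y] := by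
  induction S with
  | nil => exact Or.inl ⟨0, rfl⟩
  | cons z S ih =>
    have h0 := h 0 (by simp)
    simp only [getElem_cons_zero, length_cons] at h0
    rcases h0 with rfl | ⟨rfl, hlen⟩
    · have hS := ih fun t ht => by
        have := h (t + 1) (by simpa using ht)
        rw [getElem_cons_succ] at this
        simpa using this
      rcases hS with ⟨i, rfl⟩ | ⟨i, rfl⟩
      · exact Or.inl ⟨i + 1, rfl⟩
      · exact Or.inr ⟨i + 1, rfl⟩
    · obtain rfl : S = [] := length_eq_zero_iff.1 (by simpa using hlen)
      exact Or.inr ⟨0, rfl⟩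

theorem getElem?_flatMap_mul_add {β γ : Type*} {f : β → List γ} {n : ℕ} {l : List β}
    (hf : ∀ b ∈ l, (f b).length = n) {q r : ℕ} (hr : r < n) :
    (l.flatMap f)[q * n + r]? = l[q]?.bind fun b => (f b)[r]? := by
  induction l generalizing q with
  | nil => simp
  | cons b l ih =>
    rw [flatMap_cons, getElem?_append, hf b mem_cons_self]
    cases q with
    | zero => simp [hr]
    | succ q =>
      rw [if_neg (by rw [Nat.succ_mul]; omega), show (q + 1) * n + r - n = q * n + r by
        rw [Nat.succ_mul]; omega, ih fun b hb => hf b (mem_cons_of_mem _ hb)]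
      simp

theorem mul_add_inj {n q q' r r' : ℕ} (hr : r < n) (hr' : r' < n)
    (h : q * n + r = q' * n + r') : q = q' ∧ r = r' := by
  have hn : 0 < n := by omega
  have hdiv := congrArg (· / n) h
  have hmod := congrArg (· % n) h
  simp only [Nat.mul_add_div hn, Nat.mul_comm q, Nat.mul_comm q', Nat.div_eq_of_lt hr,
    Nat.div_eq_of_lt hr', Nat.mul_add_mod, Nat.mod_eq_of_lt hr, Nat.mod_eq_of_lt hr'] at hdiv hmod
  omega

section W

variable {σ k : ℕ}

@[simp] theorem la_ne_dol : la σ ≠ dol σ := by simp [la, dol]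

@[simp] theorem lb_ne_dol (j : Fin σ) : lb σ j ≠ dol σ := by simp [lb, dol]

@[simp] theorem lb_ne_la (j : Fin σ) : lb σ j ≠ la σ := by simp [lb, la]

@[simp] theorem dol_ne_la : dol σ ≠ la σ := la_ne_dol.symm

@[simp] theorem dol_ne_lb (j : Fin σ) : dol σ ≠ lb σ j := (lb_ne_dol j).symm

@[simp] theorem la_ne_lb (j : Fin σ) : la σ ≠ lb σ j := (lb_ne_la j).symm

@[simp] theorem lb_inj {i j : Fin σ} : lb σ i = lb σ j ↔ i = j := by simp [lb]

theorem alph_cases (c : Alph σ) : c = dol σ ∨ c = la σ ∨ ∃ j, c = lb σ j := by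
  rcases c with ⟨⟩ | ⟨⟩ | j
  exacts [Or.inl rfl, Or.inr (Or.inl rfl), Or.inr (Or.inr ⟨j, rfl⟩)]

def block (σ k : ℕ) (j : Fin σ) : List (Alph σ) :=
  lb σ j :: (replicate k (la σ) ++ [dol σ])

theorem W_eq_flatMap_block : W σ k = (finRange σ).flatMap (block σ k) := rfl

@[simp] theorem length_block (j : Fin σ) : (block σ k j).length = k + 2 := by simp [block]

theorem length_W : (W σ k).length = σ * (k + 2) := by
  simp [W_eq_flatMap_block, length_flatMap]

theorem getElem?_block_eq_some_iff {j : Fin σ} {r : ℕ} {c : Alph σ} :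
    (block σ k j)[r]? = some c ↔
      r = 0 ∧ lb σ j = c ∨ 1 ≤ r ∧ r ≤ k ∧ la σ = c ∨ r = k + 1 ∧ dol σ = c := by
  rcases r with _ | r
  · simp [block]
  · rcases lt_trichotomy r k with h | rfl | h
    · simp [block, getElem?_append_left, h, Nat.succ_le_of_lt h, h.ne]
    · simp [block]
    · rw [getElem?_eq_none (by rw [length_block]; omega)]
      simp only [reduceCtorEq, false_iff]
      rintro (⟨h0, -⟩ | ⟨-, h2, -⟩ | ⟨h3, -⟩) <;> omega

theorem getElem?_W_mul_add (j : Fin σ) {r : ℕ} (hr : r < k + 2) :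
    (W σ k)[j * (k + 2) + r]? = (block σ k j)[r]? := by
  rw [W_eq_flatMap_block, getElem?_flatMap_mul_add (fun j _ => length_block j) hr]
  simp

theorem getElem?_W_eq_some_iff {p : ℕ} {c : Alph σ} :
    (W σ k)[p]? = some c ↔
      ∃ j : Fin σ, ∃ r < k + 2, p = j * (k + 2) + r ∧ (block σ k j)[r]? = some c := by
  constructor
  · intro h
    have hp : p < σ * (k + 2) := length_W (k := k) ▸ (List.getElem?_eq_some_iff.1 h).1
    have hj : p / (k + 2) < σ := Nat.div_lt_of_lt_mul (Nat.mul_comm σ _ ▸ hp)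
    have hr : p % (k + 2) < k + 2 := Nat.mod_lt _ (by omega)
    have hpr : p = p / (k + 2) * (k + 2) + p % (k + 2) := (Nat.div_add_mod' p _).symm
    refine ⟨⟨_, hj⟩, _, hr, hpr, ?_⟩
    rwa [← getElem?_W_mul_add _ hr, ← hpr]
  · rintro ⟨j, r, hr, rfl, h⟩
    rwa [getElem?_W_mul_add j hr]

theorem getElem?_W_eq_lb_iff {p : ℕ} {j : Fin σ} :
    (W σ k)[p]? = some (lb σ j) ↔ p = j * (k + 2) := by
  simp [getElem?_W_eq_some_iff, getElem?_block_eq_some_iff]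

theorem getElem?_W_eq_la_iff {p : ℕ} :
    (W σ k)[p]? = some (la σ) ↔
      ∃ j : Fin σ, ∃ r, 1 ≤ r ∧ r ≤ k ∧ p = j * (k + 2) + r := by
  simp only [getElem?_W_eq_some_iff, getElem?_block_eq_some_iff]
  constructor
  · rintro ⟨j, r, -, rfl, h⟩
    exact ⟨j, r, by simpa using h⟩
  · rintro ⟨j, r, h1, h2, rfl⟩
    exact ⟨j, r, by omega, rfl, by simp [h1, h2]⟩

theorem getElem?_W_eq_dol_iff {p : ℕ} :
    (W σ k)[p]? = some (dol σ) ↔ ∃ j : Fin σ, p = j * (k + 2) + (k + 1) := by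
  simp [getElem?_W_eq_some_iff, getElem?_block_eq_some_iff]

theorem exists_lb_of_getElem?_W_eq_dol {p : ℕ} {c : Alph σ}
    (hp : (W σ k)[p]? = some (dol σ)) (hc : (W σ k)[p + 1]? = some c) : ∃ j, c = lb σ j := by
  obtain ⟨j, rfl⟩ := getElem?_W_eq_dol_iff.1 hp
  obtain ⟨j', r, hr, h, hc⟩ := getElem?_W_eq_some_iff.1 hc
  obtain ⟨-, rfl⟩ :=
    mul_add_inj (q := j + 1) (q' := j') (r := 0) (by omega) hr (by rw [Nat.succ_mul]; omega)
  rw [getElem?_block_eq_some_iff] at hc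
  exact ⟨j', by simpa [eq_comm] using hc⟩

theorem exists_of_replicate_la_mem_occurrences_W {i p : ℕ} (hi : 0 < i)
    (hp : p ∈ occurrences (W σ k) (replicate i (la σ))) :
    ∃ j : Fin σ, ∃ r, 1 ≤ r ∧ r + i ≤ k + 1 ∧ p = j * (k + 2) + r := by
  have hla : ∀ t < i, (W σ k)[p + t]? = some (la σ) := fun t ht => by
    have := (mem_occurrences.1 hp).2 t (by simpa)
    rwa [getElem_replicate] at this
  obtain ⟨j, r, hr1, hrk, rfl⟩ := getElem?_W_eq_la_iff.1 (by simpa using hla 0 hi)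
  refine ⟨j, r, hr1, not_lt.1 fun h => ?_, rfl⟩
  have hdol := hla (k + 1 - r) (by omega)
  rw [Nat.add_assoc, show r + (k + 1 - r) = k + 1 by omega, getElem?_W_mul_add j (by omega),
    getElem?_block_eq_some_iff] at hdol
  simp at hdol

theorem replicate_la_mem_occurrences_W (j : Fin σ) {r i : ℕ} (hr : 1 ≤ r)
    (hri : r + i ≤ k + 1) :
    j * (k + 2) + r ∈ occurrences (W σ k) (replicate i (la σ)) := by
  refine mem_occurrences.2 ⟨?_, fun t ht => ?_⟩
  · rw [length_W]
    nlinarith [j.isLt]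
  · rw [length_replicate] at ht
    rw [Nat.add_assoc, getElem?_W_mul_add j (by omega), getElem_replicate,
      getElem?_block_eq_some_iff]
    exact Or.inr (Or.inl ⟨by omega, by omega, rfl⟩)

theorem replicate_la_append_dol_mem_occurrences_W (j : Fin σ) {r i : ℕ} (hr : 1 ≤ r)
    (hri : r + i = k + 1) :
    j * (k + 2) + r ∈ occurrences (W σ k) (replicate i (la σ) ++ [dol σ]) := by
  refine mem_occurrences_append_singleton.2
    ⟨replicate_la_mem_occurrences_W j hr hri.le, getElem?_W_eq_dol_iff.2 ⟨j, ?_⟩⟩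
  rw [length_replicate]
  omega

theorem lb_cons_mem_occurrences_W (j : Fin σ) {S : List (Alph σ)}
    (hS : j * (k + 2) + 1 ∈ occurrences (W σ k) S) :
    j * (k + 2) ∈ occurrences (W σ k) (lb σ j :: S) :=
  mem_occurrences_cons.2 ⟨hS, getElem?_W_eq_lb_iff.2 rfl⟩

theorem not_dol_infix_W {c : Alph σ} (hc : ∀ j, c ≠ lb σ j) : ¬[dol σ, c] <:+: W σ k := by
  intro h
  obtain ⟨p, hd, hc'⟩ := pair_infix_iff.1 h
  obtain ⟨j, rfl⟩ := exists_lb_of_getElem?_W_eq_dol hd hc'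
  exact hc j rfl

theorem not_la_lb_infix_W (j : Fin σ) : ¬[la σ, lb σ j] <:+: W σ k := by
  intro h
  obtain ⟨p, ha, hb⟩ := pair_infix_iff.1 h
  obtain ⟨j', r, hr1, hrk, rfl⟩ := getElem?_W_eq_la_iff.1 ha
  rw [getElem?_W_eq_lb_iff] at hb
  have := mul_add_inj (n := k + 2) (q := j') (r := r + 1) (q' := j) (r' := 0)
    (by omega) (by omega) (by omega)
  omega

theorem not_lb_infix_W_of_val_eq_zero (c : Alph σ) {j : Fin σ} (hj : (j : ℕ) = 0) :
    ¬[c, lb σ j] <:+: W σ k := by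
  intro h
  obtain ⟨p, -, hb⟩ := pair_infix_iff.1 h
  rw [getElem?_W_eq_lb_iff, hj] at hb
  simp at hb

theorem not_replicate_la_infix_W {i : ℕ} (hi : k < i) : ¬replicate i (la σ) <:+: W σ k := by
  intro h
  obtain ⟨p, hp⟩ := infix_iff_nonempty_occurrences.1 h
  obtain ⟨j, r, hr, hri, -⟩ := exists_of_replicate_la_mem_occurrences_W (by omega) hp
  omega

theorem exists_eq_replicate_of_one_lt_card_occurrences_W {S : List (Alph σ)}
    (h : 1 < (occurrences (W σ k) S).card) :
    (∃ i, S = replicate i (la σ)) ∨ ∃ i, S = replicate i (la σ) ++ [dol σ] := by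
  obtain ⟨p₁, hp₁, p₂, hp₂, hne⟩ := Finset.one_lt_card.1 h
  have hW₁ := (mem_occurrences.1 hp₁).2
  have hW₂ := (mem_occurrences.1 hp₂).2
  -- each `lb σ j` occurs only once in `W σ k`
  have hlb : ∀ t (ht : t < S.length) j, S[t] ≠ lb σ j := by
    intro t ht j hj
    have e₁ := hW₁ t ht
    have e₂ := hW₂ t ht
    rw [hj, getElem?_W_eq_lb_iff] at e₁ e₂
    omega
  refine eq_replicate_or_eq_replicate_append_singleton fun t ht => ?_
  rcases alph_cases S[t] with hd | ha | ⟨j, hj⟩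
  · refine Or.inr ⟨hd, ?_⟩
    by_contra hlast
    have hnext := hW₁ (t + 1) (by omega)
    rw [← Nat.add_assoc] at hnext
    obtain ⟨j, hj⟩ := exists_lb_of_getElem?_W_eq_dol (hd ▸ hW₁ t ht) hnext
    exact hlb (t + 1) (by omega) j hj
  · exact Or.inl ha
  · exact absurd hj (hlb t ht j)

theorem eq_of_maxRepeat_W {S : List (Alph σ)} (h : MaxRepeat (W σ k) S) :
    S = [] ∨ S = replicate k (la σ) ++ [dol σ] ∨
      ∃ i, 1 ≤ i ∧ i < k ∧ S = replicate i (la σ) := by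
  obtain ⟨hocc, hext⟩ := maxRepeat_iff.1 h
  obtain ⟨p₀, hp₀⟩ := Finset.card_pos.1 (by omega : 0 < (occurrences (W σ k) S).card)
  have hinf := infix_of_mem_occurrences hp₀
  rcases exists_eq_replicate_of_one_lt_card_occurrences_W hocc with ⟨i, rfl⟩ | ⟨i, rfl⟩
  · rcases Nat.eq_zero_or_pos i with rfl | hi
    · exact Or.inl rfl
    have hik : i ≤ k := not_lt.1 fun hki => not_replicate_la_infix_W hki hinf
    refine Or.inr (Or.inr ⟨i, hi, hik.lt_of_ne fun hik => ?_, rfl⟩)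
    subst hik
    -- every occurrence of `a^k` is followed by `$`
    obtain ⟨p, hp, hpd⟩ := (hext (dol σ)).2
    obtain ⟨j, r, hr, hri, rfl⟩ := exists_of_replicate_la_mem_occurrences_W hi hp
    exact hpd (getElem?_W_eq_dol_iff.2 ⟨j, by rw [length_replicate]; omega⟩)
  · have hik : i ≤ k := not_lt.1 fun hki =>
      not_replicate_la_infix_W hki ((prefix_append _ _).isInfix.trans hinf)
    obtain rfl : i = k := by
      refine hik.antisymm (not_lt.1 fun hik => ?_)
      -- every occurrence of `a^i $` with `i < k` is preceded by `a`
      obtain ⟨p, hp, hpa⟩ := (hext (la σ)).1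
      have hd := (mem_occurrences_append_singleton.1 hp).2
      rw [length_replicate] at hd
      obtain ⟨j, hj⟩ := getElem?_W_eq_dol_iff.1 hd
      exact hpa ⟨by omega, getElem?_W_eq_la_iff.2 ⟨j, k - i, by omega, by omega, by omega⟩⟩
    exact Or.inr (Or.inl rfl)

theorem W_ne_nil (hσ : 0 < σ) : W σ k ≠ [] :=
  ne_nil_of_length_pos (by rw [length_W]; positivity)

theorem maxRepeat_W_replicate (hσ : 2 ≤ σ) {i : ℕ} (hi : 1 ≤ i) (hik : i < k) :
    MaxRepeat (W σ k) (replicate i (la σ)) := by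
  have h₀ : 1 ∈ occurrences (W σ k) (replicate i (la σ)) := by
    simpa using replicate_la_mem_occurrences_W (k := k) ⟨0, by omega⟩ le_rfl (by omega)
  have h₁ : k + 3 ∈ occurrences (W σ k) (replicate i (la σ)) := by
    simpa using replicate_la_mem_occurrences_W (k := k) ⟨1, by omega⟩ le_rfl (by omega)
  have hend : k + 1 - i ∈ occurrences (W σ k) (replicate i (la σ)) := by
    simpa using replicate_la_mem_occurrences_W (k := k) (⟨0, by omega⟩ : Fin σ)
      (r := k + 1 - i) (by omega) (by omega)
  have hlb : (W σ k)[0]? = some (lb σ ⟨0, by omega⟩) := getElem?_W_eq_lb_iff.2 (by simp)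
  have hla : ∀ r, 1 ≤ r → r ≤ k → (W σ k)[r]? = some (la σ) := fun r h1 h2 =>
    getElem?_W_eq_la_iff.2 ⟨⟨0, by omega⟩, r, h1, h2, by simp⟩
  have hdol : (W σ k)[k + 1]? = some (dol σ) :=
    getElem?_W_eq_dol_iff.2 ⟨⟨0, by omega⟩, by simp⟩
  refine maxRepeat_iff.2
    ⟨Finset.one_lt_card.2 ⟨1, h₀, k + 3, h₁, by omega⟩, fun c => ⟨?_, ?_⟩⟩
  · by_cases hc : c = la σ
    · refine ⟨1, h₀, fun ⟨_, h⟩ => ?_⟩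
      simp [hlb, hc] at h
    · refine ⟨k + 1 - i, hend, fun ⟨_, h⟩ => hc ?_⟩
      rw [hla _ (by omega) (by omega)] at h
      exact (Option.some_inj.1 h).symm
  · rw [length_replicate]
    by_cases hc : c = la σ
    · refine ⟨k + 1 - i, hend, ?_⟩
      rw [show k + 1 - i + i = k + 1 by omega, hdol, hc]
      simp
    · refine ⟨1, h₀, ?_⟩
      rw [hla _ (by omega) (by omega)]
      exact fun h => hc (Option.some_inj.1 h).symm

theorem maxRepeat_W_replicate_append_dol (hσ : 2 ≤ σ) :
    MaxRepeat (W σ k) (replicate k (la σ) ++ [dol σ]) := by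
  have hocc : ∀ j : Fin σ,
      j * (k + 2) + 1 ∈ occurrences (W σ k) (replicate k (la σ) ++ [dol σ]) := fun j =>
    replicate_la_append_dol_mem_occurrences_W j le_rfl (by omega)
  have h₀ := hocc ⟨0, by omega⟩
  have h₁ := hocc ⟨1, by omega⟩
  simp only [Nat.zero_mul, Nat.zero_add, Nat.one_mul] at h₀ h₁
  refine maxRepeat_iff.2
    ⟨Finset.one_lt_card.2 ⟨1, h₀, k + 2 + 1, h₁, by omega⟩, fun c => ⟨?_, ?_⟩⟩
  · by_cases hc : c = lb σ ⟨0, by omega⟩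
    · refine ⟨k + 2 + 1, h₁, fun ⟨_, h⟩ => ?_⟩
      rw [Nat.add_sub_cancel, hc, getElem?_W_eq_lb_iff] at h
      simp at h
    · refine ⟨1, h₀, fun ⟨_, h⟩ => hc ?_⟩
      rw [Nat.sub_self, (getElem?_W_eq_lb_iff (j := ⟨0, by omega⟩)).2 (by simp)] at h
      exact (Option.some_inj.1 h).symm
  · -- the last occurrence ends the word
    obtain ⟨m, rfl⟩ : ∃ m, σ = m + 1 := ⟨σ - 1, by omega⟩
    refine ⟨m * (k + 2) + 1, by simpa using hocc ⟨m, by omega⟩, ?_⟩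
    rw [getElem?_eq_none (by
      simp only [length_W, Nat.succ_mul, length_append, length_replicate, length_singleton]; omega)]
    simp

theorem MRset_W (hσ : 2 ≤ σ) :
    MRset (W σ k) = insert [] (insert (replicate k (la σ) ++ [dol σ])
      ((Finset.Ico 1 k).image fun i => replicate i (la σ))) := by
  ext S
  simp only [mem_MRset, Finset.mem_insert, Finset.mem_image, Finset.mem_Ico]
  constructor
  · intro h
    rcases eq_of_maxRepeat_W h with h | h | ⟨i, h1, h2, rfl⟩
    exacts [Or.inl h, Or.inr (Or.inl h), Or.inr (Or.inr ⟨i, ⟨h1, h2⟩, rfl⟩)]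
  · rintro (rfl | rfl | ⟨i, ⟨h1, h2⟩, rfl⟩)
    · exact maxRepeat_nil (W_ne_nil (by omega))
    · exact maxRepeat_W_replicate_append_dol hσ
    · exact maxRepeat_W_replicate hσ h1 h2

theorem sum_MRset_W (hσ : 2 ≤ σ) (f : List (Alph σ) → ℕ) :
    ∑ S ∈ MRset (W σ k), f S = f [] + (f (replicate k (la σ) ++ [dol σ]) +
      ∑ i ∈ Finset.Ico 1 k, f (replicate i (la σ))) := by
  have hinj : Set.InjOn (fun i => replicate i (la σ)) (Finset.Ico 1 k) :=
    fun i _ j _ h => by simpa using congrArg length h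
  rw [MRset_W hσ, Finset.sum_insert, Finset.sum_insert, Finset.sum_image hinj]
  · simp only [Finset.mem_image, Finset.mem_Ico, not_exists, not_and]
    intro i hi h
    have := congrArg length h
    simp only [length_replicate, length_append, length_singleton] at this
    omega
  · simp only [Finset.mem_insert, Finset.mem_image, Finset.mem_Ico, not_or, not_exists, not_and]
    refine ⟨by simp, fun i hi h => ?_⟩
    simpa [(Nat.one_le_iff_ne_zero.1 hi.1)] using congrArg length h

theorem card_filter_alph (P : Alph σ → Prop) [DecidablePred P] :
    (Finset.univ.filter P).card = (if P (dol σ) then 1 else 0) + (if P (la σ) then 1 else 0) +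
      (Finset.univ.filter fun j => P (lb σ j)).card := by
  simp only [Finset.card_filter, Fintype.sum_sum_type, Fintype.sum_unique, add_assoc]
  rfl

theorem singleton_infix_W (hσ : 0 < σ) (hk : 1 ≤ k) (c : Alph σ) : [c] <:+: W σ k := by
  rcases alph_cases c with rfl | rfl | ⟨j, rfl⟩
  · exact infix_of_mem_occurrences
      (replicate_la_append_dol_mem_occurrences_W (i := 0) ⟨0, hσ⟩ (k := k) (by omega) rfl)
  · exact infix_of_mem_occurrences
      (replicate_la_mem_occurrences_W (i := 1) ⟨0, hσ⟩ le_rfl (by omega))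
  · exact infix_of_mem_occurrences
      (lb_cons_mem_occurrences_W j (replicate_la_mem_occurrences_W (i := 0) j le_rfl (by omega)))

theorem card_alph : Fintype.card (Alph σ) = σ + 2 := by
  rw [Fintype.card_sum, Fintype.card_sum, Fintype.card_unit, Fintype.card_fin]
  omega

theorem lext_W_nil (hσ : 0 < σ) (hk : 1 ≤ k) : lext (W σ k) [] = σ + 2 := by
  rw [lext, Finset.filter_true_of_mem fun c _ => singleton_infix_W hσ hk c, Finset.card_univ,
    card_alph]

theorem rext_W_nil (hσ : 0 < σ) (hk : 1 ≤ k) : rext (W σ k) [] = σ + 2 := by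
  rw [rext, Finset.filter_true_of_mem fun c _ => nil_append [c] ▸ singleton_infix_W hσ hk c,
    Finset.card_univ, card_alph]

theorem lext_W_replicate (hσ : 0 < σ) {i : ℕ} (hi : 1 ≤ i) (hik : i < k) :
    lext (W σ k) (replicate i (la σ)) = σ + 1 := by
  have hdol : ¬dol σ :: replicate i (la σ) <:+: W σ k := by
    obtain ⟨i, rfl⟩ : ∃ i', i = i' + 1 := ⟨i - 1, by omega⟩
    exact fun h => not_dol_infix_W la_ne_lb
      ((prefix_append [dol σ, la σ] (replicate i (la σ))).isInfix.trans h)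
  have hla : la σ :: replicate i (la σ) <:+: W σ k := by
    rw [← replicate_succ]
    exact infix_of_mem_occurrences
      (replicate_la_mem_occurrences_W (i := i + 1) ⟨0, hσ⟩ le_rfl (by omega))
  have hlb : ∀ j, lb σ j :: replicate i (la σ) <:+: W σ k := fun j =>
    infix_of_mem_occurrences
      (lb_cons_mem_occurrences_W j (replicate_la_mem_occurrences_W (i := i) j le_rfl (by omega)))
  simp only [lext, card_filter_alph, hdol, hla, hlb, if_false, if_true, Finset.filter_true,
    Finset.card_univ, Fintype.card_fin]
  omega

theorem rext_W_replicate (hσ : 0 < σ) {i : ℕ} (hi : 1 ≤ i) (hik : i < k) :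
    rext (W σ k) (replicate i (la σ)) = 2 := by
  have hdol : replicate i (la σ) ++ [dol σ] <:+: W σ k := infix_of_mem_occurrences
    (replicate_la_append_dol_mem_occurrences_W ⟨0, hσ⟩ (r := k + 1 - i) (by omega) (by omega))
  have hla : replicate i (la σ) ++ [la σ] <:+: W σ k := by
    rw [← replicate_succ']
    exact infix_of_mem_occurrences
      (replicate_la_mem_occurrences_W (i := i + 1) ⟨0, hσ⟩ le_rfl (by omega))
  have hlb (j : Fin σ) : ¬replicate i (la σ) ++ [lb σ j] <:+: W σ k := by
    obtain ⟨i, rfl⟩ : ∃ i', i = i' + 1 := ⟨i - 1, by omega⟩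
    rw [replicate_succ', append_assoc]
    exact fun h => not_la_lb_infix_W j ((suffix_append _ [la σ, lb σ j]).isInfix.trans h)
  simp [rext, card_filter_alph, hdol, hla, hlb]

theorem lext_W_replicate_append_dol (hk : 1 ≤ k) :
    lext (W σ k) (replicate k (la σ) ++ [dol σ]) = σ := by
  obtain ⟨k, rfl⟩ : ∃ k', k = k' + 1 := ⟨k - 1, by omega⟩
  have hdol : ¬dol σ :: (replicate (k + 1) (la σ) ++ [dol σ]) <:+: W σ (k + 1) := fun h =>
    not_dol_infix_W la_ne_lb ((prefix_append [dol σ, la σ] _).isInfix.trans h)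
  have hla : ¬la σ :: (replicate (k + 1) (la σ) ++ [dol σ]) <:+: W σ (k + 1) := fun h =>
    not_replicate_la_infix_W (Nat.lt_succ_self (k + 1))
      ((prefix_append (replicate (k + 2) (la σ)) [dol σ]).isInfix.trans h)
  have hlb (j : Fin σ) : lb σ j :: (replicate (k + 1) (la σ) ++ [dol σ]) <:+: W σ (k + 1) :=
    infix_of_mem_occurrences
      (lb_cons_mem_occurrences_W j (replicate_la_append_dol_mem_occurrences_W j le_rfl (by omega)))
  simp [lext, card_filter_alph, hdol, hla, hlb]

theorem rext_W_replicate_append_dol :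
    rext (W σ k) (replicate k (la σ) ++ [dol σ]) = σ - 1 := by
  have hdol : ¬replicate k (la σ) ++ [dol σ, dol σ] <:+: W σ k := fun h =>
    not_dol_infix_W dol_ne_lb ((suffix_append _ _).isInfix.trans h)
  have hla : ¬replicate k (la σ) ++ [dol σ, la σ] <:+: W σ k := fun h =>
    not_dol_infix_W la_ne_lb ((suffix_append _ _).isInfix.trans h)
  have hlb (j : Fin σ) :
      replicate k (la σ) ++ [dol σ, lb σ j] <:+: W σ k ↔ (j : ℕ) ≠ 0 := by
    constructor
    · exact fun h hj => not_lb_infix_W_of_val_eq_zero (dol σ) hj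
        ((suffix_append _ _).isInfix.trans h)
    · intro hj
      rw [← singleton_append, ← append_assoc]
      obtain ⟨j', hj'⟩ : ∃ j', (j : ℕ) = j' + 1 := ⟨j - 1, by omega⟩
      refine infix_of_mem_occurrences (mem_occurrences_append_singleton.2
        ⟨replicate_la_append_dol_mem_occurrences_W ⟨j', by omega⟩ le_rfl (by omega), ?_⟩)
      rw [getElem?_W_eq_lb_iff, hj']
      simp only [length_append, length_replicate, length_singleton, Nat.succ_mul]
      omega
  simp [rext, card_filter_alph, hdol, hla, hlb, card_filter_fin_val_ne_zero]

end W

/-- `el(T) = (k-1)(σ+1) + σ + (σ+2)` and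
`er(T) = 2(k-1) + (σ-1) + (σ+2)`; in particular `el(T) ∈ Θ(kσ)` and `er(T) ∈ Θ(k+σ)`. -/
theorem el_er_W (σ k : ℕ) (hσ : 2 ≤ σ) (hk : 2 ≤ k) :
    el (W σ k) = (k - 1) * (σ + 1) + σ + (σ + 2) ∧
    er (W σ k) = 2 * (k - 1) + (σ - 1) + (σ + 2) ∧
    k * σ ≤ el (W σ k) ∧ el (W σ k) ≤ 4 * (k * σ) ∧
    k + σ ≤ er (W σ k) ∧ er (W σ k) ≤ 2 * (k + σ) := by
  have hel : el (W σ k) = (k - 1) * (σ + 1) + σ + (σ + 2) := by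
    rw [el, sum_MRset_W hσ, lext_W_nil (by omega) (by omega),
      lext_W_replicate_append_dol (by omega),
      Finset.sum_congr rfl fun i hi => lext_W_replicate (by omega) (Finset.mem_Ico.1 hi).1
        (Finset.mem_Ico.1 hi).2, Finset.sum_const, Nat.card_Ico, smul_eq_mul]
    ring
  have her : er (W σ k) = 2 * (k - 1) + (σ - 1) + (σ + 2) := by
    rw [er, sum_MRset_W hσ, rext_W_nil (by omega) (by omega), rext_W_replicate_append_dol,
      Finset.sum_congr rfl fun i hi => rext_W_replicate (by omega) (Finset.mem_Ico.1 hi).1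
        (Finset.mem_Ico.1 hi).2, Finset.sum_const, Nat.card_Ico, smul_eq_mul]
    omega
  obtain ⟨m, rfl⟩ : ∃ m, k = m + 1 := ⟨k - 1, by omega⟩
  rw [hel, her, Nat.add_sub_cancel]
  exact ⟨rfl, rfl, by nlinarith, by nlinarith, by omega, by omega⟩
end
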